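/- arXiv:1308.6559 — 2 statements merged into one kernel-verified Lean document; each statement's English description precedes it below -/
import Mathlib

section
/- Let g be a centered Gaussian random variable with variance σ² > 0 and let W : ℝ² → [0,∞) be measurable with E[W(x, x + g)] = 1 for every x ∈ ℝ and with W(x, y) even in the second variable y for every x. Let f1, f2 : ℝ → ℝ be differentiable functions such that f1 is even with f1'(u) ≥ 0 for all u ≥ 0, and f2 is odd with f2'(u) ≥ 0 for all u ≥ 0, and such that f1(x+g)·f2(x+g)·W(x,x+g), f1(x+g)·W(x,x+g) and f2(x+g)·W(x,x+g) are integrable for every x. Then for every x ≥ 0, E[f1(x+g)·f2(x+g)·W(x, x+g)] ≥ E[f1(x+g)·W(x, x+g)] · E[f2(x+g)·W(x, x+g)]. -/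
/-!
Let `p` be the Lebesgue density of `x + g` weighted by `W x`. Since `W x` is even, the Gaussian
factor gives `p (-y) = exp (-c y) p y` with `c = 2x/σ² ≥ 0`. For `Y ~ p`, given `|Y| = t` the sign is
`±` with odds `1 : exp (-c t)`, so in `E[f₂]` and in `E[f₁ f₂]` (`f₁` being even) the odd `f₂` may
be replaced by its conditional mean `h t = f₂ t * tanh (c t / 2)`. Both `f₁` and `h` are even and
nondecreasing on `[0, ∞)`, hence monovary, and Chebyshev's integral inequality
`E[f₁] E[h] ≤ E[f₁ h]` concludes.
-/

open MeasureTheory ProbabilityTheory Set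

lemma integral_eq_of_forall_add_comp_neg_eq {G E : Type*} [AddGroup G] [MeasurableSpace G]
    [MeasurableNeg G] [NormedAddCommGroup E] [NormedSpace ℝ E] {μ : Measure G}
    [μ.IsNegInvariant] {F H : G → E} (hF : Integrable F μ) (hH : Integrable H μ)
    (hFH : ∀ y, F y + F (-y) = H y + H (-y)) :
    ∫ y, F y ∂μ = ∫ y, H y ∂μ := by
  have hsymm : ∀ K : G → E, Integrable K μ → ∫ y, (K y + K (-y)) ∂μ = (2 : ℝ) • ∫ y, K y ∂μ :=
    fun K hK ↦ by rw [integral_add hK hK.comp_neg, integral_neg_eq_self, two_smul]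
  have h2 : (2 : ℝ) • ∫ y, F y ∂μ = (2 : ℝ) • ∫ y, H y ∂μ := by
    rw [← hsymm F hF, ← hsymm H hH, funext hFH]
  exact smul_right_injective E two_ne_zero h2

namespace Real

lemma tanh_half_mul_one_add_exp_neg (z : ℝ) : tanh (z / 2) * (1 + exp (-z)) = 1 - exp (-z) := by
  have hz : exp (-z) = exp (-(z / 2)) * exp (-(z / 2)) := by rw [← exp_add]; ring_nf
  have hinv : exp (z / 2) * exp (-(z / 2)) = 1 := by rw [← exp_add]; simp
  have hpos : 0 < exp (z / 2) + exp (-(z / 2)) := by positivity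
  rw [tanh_eq, hz, div_mul_eq_mul_div, div_eq_iff hpos.ne']
  linear_combination 2 * exp (-(z / 2)) * hinv

lemma tanh_eq_two_div_sub_one (z : ℝ) : tanh z = 2 / (1 + exp (-(2 * z))) - 1 := by
  have h := tanh_half_mul_one_add_exp_neg (2 * z)
  rw [mul_div_cancel_left₀ z two_ne_zero] at h
  have hpos : 0 < 1 + exp (-(2 * z)) := by positivity
  rw [← eq_div_iff hpos.ne'] at h
  rw [h]
  field_simp
  ring

lemma monotone_tanh : Monotone tanh := by
  intro a b hab
  rw [tanh_eq_two_div_sub_one, tanh_eq_two_div_sub_one]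
  gcongr 2 / (1 + exp ?_) - 1
  linarith

end Real

lemma Function.Even.monovary_of_monotoneOn_Ici {f g : ℝ → ℝ} (hf : f.Even) (hg : g.Even)
    (hfm : MonotoneOn f (Ici 0)) (hgm : MonotoneOn g (Ici 0)) : Monovary f g := by
  have habs : ∀ h : ℝ → ℝ, h.Even → ∀ a, h |a| = h a := fun h hh a ↦ by
    rcases abs_choice a with ha | ha <;> rw [ha]; exact hh a
  intro a b hab
  rw [← habs f hf a, ← habs f hf b]
  rw [← habs g hg a, ← habs g hg b] at hab
  exact hfm (abs_nonneg a) (abs_nonneg b)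
    (hgm.reflect_lt (abs_nonneg a) (abs_nonneg b) hab).le

theorem Monovary.integral_mul_integral_le_integral_mul_integral {α : Type*} [MeasurableSpace α]
    {μ : Measure α} {f g w : α → ℝ} (hfg : Monovary f g) (hw : ∀ a, 0 ≤ w a)
    (hwi : Integrable w μ) (hfw : Integrable (fun a ↦ f a * w a) μ)
    (hgw : Integrable (fun a ↦ g a * w a) μ) (hfgw : Integrable (fun a ↦ f a * g a * w a) μ) :
    (∫ a, f a * w a ∂μ) * (∫ a, g a * w a ∂μ) ≤ (∫ a, w a ∂μ) * ∫ a, f a * g a * w a ∂μ := by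
  set A := ∫ a, w a ∂μ
  set B := ∫ a, f a * w a ∂μ
  set C := ∫ a, g a * w a ∂μ
  set D := ∫ a, f a * g a * w a ∂μ
  have hinner : ∀ b, 0 ≤ D - f b * C - g b * B + f b * g b * A := by
    intro b
    have h : 0 ≤ ∫ a, (f a - f b) * (g a - g b) * w a ∂μ :=
      integral_nonneg fun a ↦ mul_nonneg (hfg.sub_mul_sub_nonneg b a) (hw a)
    have hexp : ∀ a, (f a - f b) * (g a - g b) * w a
        = f a * g a * w a - f b * (g a * w a) - g b * (f a * w a) + f b * g b * w a :=
      fun a ↦ by ring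
    simp only [hexp] at h
    rwa [integral_add (by fun_prop) (by fun_prop), integral_sub (by fun_prop) (by fun_prop),
      integral_sub (by fun_prop) (by fun_prop), integral_const_mul, integral_const_mul,
      integral_const_mul] at h
  have houter : 0 ≤ ∫ b, (D - f b * C - g b * B + f b * g b * A) * w b ∂μ :=
    integral_nonneg fun b ↦ mul_nonneg (hinner b) (hw b)
  have hexp : ∀ b, (D - f b * C - g b * B + f b * g b * A) * w b
      = D * w b - C * (f b * w b) - B * (g b * w b) + A * (f b * g b * w b) :=
    fun b ↦ by ring
  simp only [hexp] at houter
  rw [integral_add (by fun_prop) (by fun_prop), integral_sub (by fun_prop) (by fun_prop),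
    integral_sub (by fun_prop) (by fun_prop), integral_const_mul, integral_const_mul,
    integral_const_mul, integral_const_mul] at houter
  linarith

open Real in
lemma MeasureTheory.Integrable.mul_tanh {f p : ℝ → ℝ} (c : ℝ)
    (hfp : Integrable (fun y ↦ f y * p y)) :
    Integrable (fun y ↦ f y * tanh (c * y / 2) * p y) := by
  have hmeas : AEStronglyMeasurable (fun y ↦ tanh (c * y / 2)) :=
    (monotone_tanh.measurable.comp (by fun_prop)).aestronglyMeasurable
  refine (hfp.bdd_mul hmeas (ae_of_all _ fun y ↦ (abs_tanh_lt_one _).le)).congr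
    (ae_of_all _ fun y ↦ by ring)

open Real in
lemma integral_mul_eq_integral_mul_tanh_mul {f p : ℝ → ℝ} {c : ℝ} (hf : f.Odd)
    (hp : ∀ y, p (-y) = exp (-(c * y)) * p y) (hfp : Integrable (fun y ↦ f y * p y)) :
    ∫ y, f y * p y = ∫ y, f y * tanh (c * y / 2) * p y := by
  refine integral_eq_of_forall_add_comp_neg_eq hfp (hfp.mul_tanh c) fun y ↦ ?_
  have hneg : c * -y / 2 = -(c * y / 2) := by ring
  rw [hf, hp, hneg, tanh_neg]
  linear_combination (-(f y * p y)) * tanh_half_mul_one_add_exp_neg (c * y)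

open Real in
lemma monotoneOn_mul_tanh {f : ℝ → ℝ} {c : ℝ} (hc : 0 ≤ c) (hf : f.Odd)
    (hfm : MonotoneOn f (Ici 0)) : MonotoneOn (fun y ↦ f y * tanh (c * y / 2)) (Ici 0) := by
  have htanh : MonotoneOn (fun y ↦ tanh (c * y / 2)) (Ici 0) :=
    (monotone_tanh.comp fun a b hab ↦ by gcongr).monotoneOn _
  refine hfm.mul htanh (fun y hy ↦ hf.map_zero ▸ hfm self_mem_Ici hy hy) fun y hy ↦ ?_
  rw [← tanh_zero]
  exact monotone_tanh (div_nonneg (mul_nonneg hc hy) zero_le_two)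

open Real in
theorem integral_mul_integral_le_of_tilt {f₁ f₂ p : ℝ → ℝ} {c : ℝ} (hc : 0 ≤ c)
    (hp₀ : ∀ y, 0 ≤ p y) (hp : ∀ y, p (-y) = exp (-(c * y)) * p y) (hpi : Integrable p)
    (hf₁ : f₁.Even) (hf₂ : f₂.Odd) (hf₁m : MonotoneOn f₁ (Ici 0)) (hf₂m : MonotoneOn f₂ (Ici 0))
    (hf₁p : Integrable (fun y ↦ f₁ y * p y)) (hf₂p : Integrable (fun y ↦ f₂ y * p y))
    (hf₁₂p : Integrable (fun y ↦ f₁ y * f₂ y * p y)) :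
    (∫ y, f₁ y * p y) * (∫ y, f₂ y * p y) ≤ (∫ y, p y) * ∫ y, f₁ y * f₂ y * p y := by
  set h := fun y ↦ f₂ y * tanh (c * y / 2)
  have hh : h.Even := fun y ↦ by
    simp only [h, hf₂ y]
    rw [show c * -y / 2 = -(c * y / 2) by ring, tanh_neg, neg_mul_neg]
  have h₂ : ∫ y, f₂ y * p y = ∫ y, h y * p y := integral_mul_eq_integral_mul_tanh_mul hf₂ hp hf₂p
  have h₁₂ : ∫ y, f₁ y * f₂ y * p y = ∫ y, f₁ y * h y * p y := by
    simpa only [h, Pi.mul_apply, mul_assoc] using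
      integral_mul_eq_integral_mul_tanh_mul (hf₁.mul_odd hf₂) hp hf₁₂p
  rw [h₂, h₁₂]
  have hmono : Monovary f₁ h :=
    hf₁.monovary_of_monotoneOn_Ici hh hf₁m (monotoneOn_mul_tanh hc hf₂ hf₂m)
  refine hmono.integral_mul_integral_le_integral_mul_integral hp₀ hpi hf₁p (hf₂p.mul_tanh c) ?_
  simpa only [h, mul_assoc] using hf₁₂p.mul_tanh c

lemma gaussianPDFReal_neg (m : ℝ) (v : NNReal) (y : ℝ) :
    gaussianPDFReal m v (-y) = Real.exp (-(2 * m / v * y)) * gaussianPDFReal m v y := by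
  simp only [gaussianPDFReal]
  rw [mul_left_comm, ← Real.exp_add]
  congr 2
  ring

lemma integral_comp_const_add_gaussianReal (m x : ℝ) (v : NNReal) (G : ℝ → ℝ) :
    ∫ u, G (x + u) ∂gaussianReal m v = ∫ y, G y ∂gaussianReal (m + x) v := by
  rw [← gaussianReal_map_const_add, (measurableEmbedding_addLeft x).integral_map]

lemma integrable_comp_const_add_gaussianReal_iff (m x : ℝ) (v : NNReal) (G : ℝ → ℝ) :
    Integrable (fun u ↦ G (x + u)) (gaussianReal m v) ↔ Integrable G (gaussianReal (m + x) v) := by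
  rw [← gaussianReal_map_const_add, (measurableEmbedding_addLeft x).integrable_map_iff]
  rfl

lemma integrable_gaussianReal_iff {m : ℝ} {v : NNReal} (hv : v ≠ 0) (G : ℝ → ℝ) :
    Integrable G (gaussianReal m v) ↔ Integrable (fun y ↦ gaussianPDFReal m v y * G y) := by
  rw [gaussianReal_of_var_ne_zero _ hv, integrable_withDensity_iff_integrable_smul'
    (measurable_gaussianPDF m v) (ae_of_all _ fun _ ↦ gaussianPDF_lt_top)]
  simp [gaussianPDF, ENNReal.toReal_ofReal (gaussianPDFReal_nonneg m v _)]

lemma monotoneOn_Ici_of_deriv_nonneg {f : ℝ → ℝ} {a : ℝ} (hf : Differentiable ℝ f)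
    (hf' : ∀ u, a < u → 0 ≤ deriv f u) : MonotoneOn f (Ici a) :=
  monotoneOn_of_deriv_nonneg (convex_Ici a) hf.continuous.continuousOn hf.differentiableOn
    fun u hu ↦ hf' u (interior_Ici.subset hu)

theorem fkg_gaussian_tilted_even_odd_general (σ2 : NNReal) (hσ : 0 < σ2)
    (W : ℝ → ℝ → ℝ)
    (hWnonneg : ∀ x y, 0 ≤ W x y)
    (hWnorm : ∀ x : ℝ, ∫ u, W x (x + u) ∂(gaussianReal 0 σ2) = 1)
    (hWeven : ∀ x y : ℝ, W x (-y) = W x y)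
    (f1 f2 : ℝ → ℝ) (hf1diff : Differentiable ℝ f1) (hf2diff : Differentiable ℝ f2)
    (hf1even : ∀ u, f1 (-u) = f1 u) (hf2odd : ∀ u, f2 (-u) = -f2 u)
    (hf1deriv : ∀ u : ℝ, 0 ≤ u → 0 ≤ deriv f1 u)
    (hf2deriv : ∀ u : ℝ, 0 ≤ u → 0 ≤ deriv f2 u)
    (hint12 : ∀ x : ℝ,
      Integrable (fun u => f1 (x + u) * f2 (x + u) * W x (x + u)) (gaussianReal 0 σ2))
    (hint1 : ∀ x : ℝ, Integrable (fun u => f1 (x + u) * W x (x + u)) (gaussianReal 0 σ2))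
    (hint2 : ∀ x : ℝ, Integrable (fun u => f2 (x + u) * W x (x + u)) (gaussianReal 0 σ2)) :
    ∀ x : ℝ, 0 ≤ x →
      (∫ u, f1 (x + u) * W x (x + u) ∂(gaussianReal 0 σ2)) *
          (∫ u, f2 (x + u) * W x (x + u) ∂(gaussianReal 0 σ2))
        ≤ ∫ u, f1 (x + u) * f2 (x + u) * W x (x + u) ∂(gaussianReal 0 σ2) := by
  intro x hx
  set p : ℝ → ℝ := fun y ↦ gaussianPDFReal x σ2 y * W x y
  have hE (F : ℝ → ℝ) : ∫ u, F (x + u) * W x (x + u) ∂gaussianReal 0 σ2 = ∫ y, F y * p y := by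
    rw [integral_comp_const_add_gaussianReal 0 x σ2 (fun y ↦ F y * W x y), zero_add,
      integral_gaussianReal_eq_integral_smul hσ.ne']
    congr 1 with y
    simp only [p, smul_eq_mul]
    ring
  have hI (F : ℝ → ℝ) (hF : Integrable (fun u ↦ F (x + u) * W x (x + u)) (gaussianReal 0 σ2)) :
      Integrable (fun y ↦ F y * p y) := by
    rw [integrable_comp_const_add_gaussianReal_iff 0 x σ2 (fun y ↦ F y * W x y), zero_add,
      integrable_gaussianReal_iff hσ.ne'] at hF
    exact hF.congr (ae_of_all _ fun y ↦ by ring)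
  have hp₁ : ∫ y, p y = 1 := by simpa [hWnorm x] using (hE fun _ ↦ 1).symm
  have hpi : Integrable p := by
    simpa using hI (fun _ ↦ 1) (Integrable.of_integral_ne_zero (by simp [hWnorm x]))
  have hp : ∀ y, p (-y) = Real.exp (-(2 * x / σ2 * y)) * p y := fun y ↦ by
    simp only [p, gaussianPDFReal_neg, hWeven]
    ring
  have hle := integral_mul_integral_le_of_tilt (by positivity)
    (fun y ↦ mul_nonneg (gaussianPDFReal_nonneg _ _ _) (hWnonneg x y)) hp hpi hf1even hf2odd
    (monotoneOn_Ici_of_deriv_nonneg hf1diff fun u hu ↦ hf1deriv u hu.le)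
    (monotoneOn_Ici_of_deriv_nonneg hf2diff fun u hu ↦ hf2deriv u hu.le)
    (hI f1 (hint1 x)) (hI f2 (hint2 x)) (hI (fun y ↦ f1 y * f2 y) (hint12 x))
  rw [hp₁, one_mul] at hle
  rwa [hE f1, hE f2, hE fun y ↦ f1 y * f2 y]

theorem fkg_gaussian_tilted_even_odd (σ2 : NNReal) (hσ : 0 < σ2)
    (W : ℝ → ℝ → ℝ) (hWmeas : Measurable (Function.uncurry W))
    (hWnonneg : ∀ x y, 0 ≤ W x y)
    (hWnorm : ∀ x : ℝ, ∫ u, W x (x + u) ∂(gaussianReal 0 σ2) = 1)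
    (hWeven : ∀ x y : ℝ, W x (-y) = W x y)
    (f1 f2 : ℝ → ℝ) (hf1diff : Differentiable ℝ f1) (hf2diff : Differentiable ℝ f2)
    (hf1even : ∀ u, f1 (-u) = f1 u) (hf2odd : ∀ u, f2 (-u) = -f2 u)
    (hf1deriv : ∀ u : ℝ, 0 ≤ u → 0 ≤ deriv f1 u)
    (hf2deriv : ∀ u : ℝ, 0 ≤ u → 0 ≤ deriv f2 u)
    (hint12 : ∀ x : ℝ,
      Integrable (fun u => f1 (x + u) * f2 (x + u) * W x (x + u)) (gaussianReal 0 σ2))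
    (hint1 : ∀ x : ℝ, Integrable (fun u => f1 (x + u) * W x (x + u)) (gaussianReal 0 σ2))
    (hint2 : ∀ x : ℝ, Integrable (fun u => f2 (x + u) * W x (x + u)) (gaussianReal 0 σ2)) :
    ∀ x : ℝ, 0 ≤ x →
      (∫ u, f1 (x + u) * W x (x + u) ∂(gaussianReal 0 σ2)) *
          (∫ u, f2 (x + u) * W x (x + u) ∂(gaussianReal 0 σ2))
        ≤ ∫ u, f1 (x + u) * f2 (x + u) * W x (x + u) ∂(gaussianReal 0 σ2) :=
  fkg_gaussian_tilted_even_odd_general σ2 hσ W hWnonneg hWnorm hWeven f1 f2 hf1diff hf2diff hf1even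
    hf2odd hf1deriv hf2deriv hint12 hint1 hint2
end

section
/- Let φ : ℝ → ℝ be twice differentiable with bounded first and second derivatives and let m > 0. Then for every x ∈ ℝ and t ∈ [0,1], the function y ↦ F_{φ,m}(y,t) is differentiable at x and its derivative equals E[φ'(x + √t·Z)·exp(m·φ(x + √t·Z))] / E[exp(m·φ(x + √t·Z))]. -/
open MeasureTheory ProbabilityTheory Set

/-- `parisiF φ m x t = (1/m) log E[exp (m φ(x + √t Z))]` with `Z` standard Gaussian. -/
noncomputable def parisiF (φ : ℝ → ℝ) (m : ℝ) (x t : ℝ) : ℝ :=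
  (1 / m) * Real.log (∫ z, Real.exp (m * φ (x + Real.sqrt t * z)) ∂(gaussianReal 0 1))

/-- `φ` is twice differentiable with bounded first and second derivatives. -/
def TwiceDiffBounded (φ : ℝ → ℝ) : Prop :=
  Differentiable ℝ φ ∧ Differentiable ℝ (deriv φ) ∧
    (∃ C, ∀ x, |deriv φ x| ≤ C) ∧ (∃ C, ∀ x, |deriv (deriv φ) x| ≤ C)

/-! Differentiation under the integral sign. Since `φ'` is bounded, `φ` grows at most linearly, so
for `y` near `x` both `exp (m φ (y + √t z))` and its `y`-derivative are dominated by
`c · exp (b |z|)`, which is integrable against the Gaussian. Dominated convergence gives the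
derivative of the partition function `∫ exp (m φ (y + √t z))`, which is positive, and the chain
rule for `log` finishes. -/

open Real

lemma integrable_exp_mul_abs_gaussianReal (μ : ℝ) (v : NNReal) (b : ℝ) :
    Integrable (fun z => exp (b * |z|)) (gaussianReal μ v) :=
  integrable_exp_mul_abs (X := id) (integrable_exp_mul_gaussianReal b)
    (integrable_exp_mul_gaussianReal (-b))

lemma le_add_mul_abs_sub_of_abs_deriv_le {ψ ψ' : ℝ → ℝ} {C : ℝ}
    (hψ : ∀ y, HasDerivAt ψ (ψ' y) y) (hC : ∀ y, |ψ' y| ≤ C) (u v : ℝ) :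
    ψ u ≤ ψ v + C * |u - v| := by
  have h := convex_univ.norm_image_sub_le_of_norm_hasDerivWithin_le
    (fun y _ => (hψ y).hasDerivWithinAt) (fun y _ => hC y) (mem_univ v) (mem_univ u)
  rw [norm_eq_abs, norm_eq_abs] at h
  linarith [le_abs_self (ψ u - ψ v)]

section

variable {ν : Measure ℝ} {ψ ψ' : ℝ → ℝ} {C : ℝ}

lemma integrable_exp_of_le_add_mul_abs (hν : ∀ b, Integrable (fun z => exp (b * |z|)) ν)
    {f : ℝ → ℝ} (hf : AEStronglyMeasurable f ν) {a b : ℝ} (hle : ∀ z, f z ≤ a + b * |z|) :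
    Integrable (fun z => exp (f z)) ν := by
  refine ((hν b).const_mul (exp a)).mono' (continuous_exp.comp_aestronglyMeasurable hf) ?_
  refine Filter.Eventually.of_forall fun z => ?_
  rw [norm_of_nonneg (exp_nonneg _), ← exp_add]
  exact exp_le_exp.2 (hle z)

lemma comp_add_mul_le_of_abs_sub_le_one (hψ : ∀ y, HasDerivAt ψ (ψ' y) y) (hC : ∀ y, |ψ' y| ≤ C)
    {x y : ℝ} (hy : |y - x| ≤ 1) (s z : ℝ) :
    ψ (y + s * z) ≤ (ψ x + C) + C * |s| * |z| := by
  have hC0 : 0 ≤ C := (abs_nonneg _).trans (hC 0)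
  have h := le_add_mul_abs_sub_of_abs_deriv_le hψ hC (y + s * z) x
  have hdist : |y + s * z - x| ≤ 1 + |s| * |z| := by
    calc |y + s * z - x| = |(y - x) + s * z| := by ring_nf
      _ ≤ |y - x| + |s * z| := abs_add_le _ _
      _ ≤ 1 + |s| * |z| := by rw [abs_mul]; linarith
  nlinarith [mul_le_mul_of_nonneg_left hdist hC0]

lemma integrable_exp_comp_add_mul (hν : ∀ b, Integrable (fun z => exp (b * |z|)) ν)
    (hψ : ∀ y, HasDerivAt ψ (ψ' y) y) (hC : ∀ y, |ψ' y| ≤ C) (s x : ℝ) :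
    Integrable (fun z => exp (ψ (x + s * z))) ν := by
  have hψc : Continuous ψ := continuous_iff_continuousAt.2 fun y => (hψ y).continuousAt
  exact integrable_exp_of_le_add_mul_abs hν
    (by fun_prop : Continuous fun z => ψ (x + s * z)).aestronglyMeasurable
    fun z => comp_add_mul_le_of_abs_sub_le_one hψ hC (x := x) (y := x) (by simp) s z

lemma hasDerivAt_integral_exp_comp_add_mul (hν : ∀ b, Integrable (fun z => exp (b * |z|)) ν)
    (hψ : ∀ y, HasDerivAt ψ (ψ' y) y) (hC : ∀ y, |ψ' y| ≤ C) (s x : ℝ) :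
    HasDerivAt (fun y => ∫ z, exp (ψ (y + s * z)) ∂ν)
      (∫ z, ψ' (x + s * z) * exp (ψ (x + s * z)) ∂ν) x := by
  have hψc : Continuous ψ := continuous_iff_continuousAt.2 fun y => (hψ y).continuousAt
  have hψ'm : Measurable ψ' := by
    rw [show ψ' = deriv ψ from funext fun y => (hψ y).deriv.symm]
    exact measurable_deriv ψ
  have hC0 : 0 ≤ C := (abs_nonneg _).trans (hC 0)
  refine (hasDerivAt_integral_of_dominated_loc_of_deriv_le
    (F := fun y z => exp (ψ (y + s * z))) (F' := fun y z => ψ' (y + s * z) * exp (ψ (y + s * z)))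
    (Metric.ball_mem_nhds x one_pos)
    (Filter.Eventually.of_forall fun y => (by fun_prop : Continuous _).aestronglyMeasurable)
    (integrable_exp_comp_add_mul hν hψ hC s x)
    (by fun_prop : Measurable fun z => ψ' (x + s * z) * exp (ψ (x + s * z))).aestronglyMeasurable
    (bound := fun z => C * exp ((ψ x + C) + C * |s| * |z|)) ?_ ?_ ?_).2
  · refine Filter.Eventually.of_forall fun z y hy => ?_
    have hyx : |y - x| ≤ 1 := (Metric.mem_ball.1 hy).le
    rw [norm_mul, norm_of_nonneg (exp_nonneg _)]
    exact mul_le_mul (hC _) (exp_le_exp.2 (comp_add_mul_le_of_abs_sub_le_one hψ hC hyx s z))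
      (exp_nonneg _) hC0
  · exact (integrable_exp_of_le_add_mul_abs hν (by fun_prop : Continuous _).aestronglyMeasurable
      fun z => le_refl _).const_mul C
  · refine Filter.Eventually.of_forall fun z y _ => ?_
    simpa [mul_comm] using ((hψ (y + s * z)).comp y ((hasDerivAt_id y).add_const (s * z))).exp

end

theorem parisiF_hasDerivAt (φ : ℝ → ℝ) (hφ : TwiceDiffBounded φ) (m : ℝ) (hm : 0 < m) :
    ∀ (x : ℝ), ∀ t ∈ Set.Icc (0 : ℝ) 1,
      HasDerivAt (fun y => parisiF φ m y t)
        ((∫ z, deriv φ (x + Real.sqrt t * z) *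
            Real.exp (m * φ (x + Real.sqrt t * z)) ∂(gaussianReal 0 1)) /
          (∫ z, Real.exp (m * φ (x + Real.sqrt t * z)) ∂(gaussianReal 0 1))) x := by
  intro x t _
  obtain ⟨hφd, -, ⟨C, hC⟩, -⟩ := hφ
  have hmφ : ∀ y, HasDerivAt (fun y => m * φ y) (m * deriv φ y) y :=
    fun y => (hφd y).hasDerivAt.const_mul m
  have hmC : ∀ y, |m * deriv φ y| ≤ m * C := fun y => by
    rw [abs_mul, abs_of_pos hm]; exact mul_le_mul_of_nonneg_left (hC y) hm.le
  have hγ := integrable_exp_mul_abs_gaussianReal 0 1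
  have hZ := (integral_exp_pos (integrable_exp_comp_add_mul hγ hmφ hmC (√t) x)).ne'
  have hder := ((hasDerivAt_integral_exp_comp_add_mul hγ hmφ hmC (√t) x).log hZ).const_mul (1 / m)
  refine hder.congr_deriv ?_
  simp_rw [mul_assoc, integral_const_mul]
  field_simp
end
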